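/- arXiv:1806.11028 — 2 statements merged into one kernel-verified Lean document; each statement's English description precedes it below -/
import Mathlib

section
/- Let A ∈ Mat_n(𝕋) and let τ ∈ S_n be a permutation with ω(τ) = Σ_i A_{i,τ(i)} > −∞. For each index i, let μ_i be the average weight of the unique cycle of τ containing i (i.e., (Σ_{j in that cycle} A_{j,τ(j)})/length). Suppose that every simple cycle θ of the digraph G(A) that is not a cycle of τ satisfies ω(θ) < Σ_{i ∈ θ} μ_i. Then A is nonsingular and τ is the unique permutation attaining per(A). -/
attribute [local instance] Classical.propDecidable

/-- The tropical (max-plus) semiring carrier: `ℝ ∪ {−∞}`. -/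
abbrev Trop : Type := WithBot ℝ

/-- Tropical matrix multiplication: `(A ⊙ B)_{i,j} = max_k (A_{i,k} + B_{k,j})`. -/
def tmul {n m p : ℕ} (A : Matrix (Fin n) (Fin m) Trop) (B : Matrix (Fin m) (Fin p) Trop) :
    Matrix (Fin n) (Fin p) Trop :=
  fun i j => Finset.univ.sup (fun k => A i k + B k j)

/-- The tropical identity matrix. -/
def tId (n : ℕ) : Matrix (Fin n) (Fin n) Trop :=
  fun i j => if i = j then (0 : Trop) else ⊥

/-- Tropical matrix power. -/
def tPow {n : ℕ} (A : Matrix (Fin n) (Fin n) Trop) : ℕ → Matrix (Fin n) (Fin n) Trop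
  | 0 => tId n
  | t + 1 => tmul A (tPow A t)

/-- Weight of a permutation: `ω(π) = Σ_i A_{i,π(i)}`. -/
def permWeight {n : ℕ} (A : Matrix (Fin n) (Fin n) Trop) (π : Equiv.Perm (Fin n)) : Trop :=
  ∑ i, A i (π i)

/-- Tropical permanent: `per(A) = max_π ω(π)`. -/
def tPer {n : ℕ} (A : Matrix (Fin n) (Fin n) Trop) : Trop :=
  Finset.univ.sup (fun π : Equiv.Perm (Fin n) => permWeight A π)

/-- Nonsingular: exactly one permutation attains the permanent. -/
def Nonsingular {n : ℕ} (A : Matrix (Fin n) (Fin n) Trop) : Prop :=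
  ∃! π : Equiv.Perm (Fin n), permWeight A π = tPer A

/-- Tropical rank: the largest `k` such that `A` has a nonsingular `k × k` submatrix. -/
noncomputable def tropRank {n : ℕ} (A : Matrix (Fin n) (Fin n) Trop) : ℕ :=
  sSup {k : ℕ | ∃ (r : Fin k → Fin n) (c : Fin k → Fin n),
    Function.Injective r ∧ Function.Injective c ∧
    Nonsingular (fun i j => A (r i) (c j))}

/-- Factor rank: the smallest `k` such that `A = B ⊙ C` with `B` of size `n × k` and `C` of
size `k × n`. -/
noncomputable def facRank {n : ℕ} (A : Matrix (Fin n) (Fin n) Trop) : ℕ :=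
  sInf {k : ℕ | ∃ (B : Matrix (Fin n) (Fin k) Trop) (C : Matrix (Fin k) (Fin n) Trop),
    A = tmul B C}

/-- Trace: `tr(A) = Σ_i A_{i,i}` in `ℝ ∪ {−∞}`. -/
def tTrace {n : ℕ} (A : Matrix (Fin n) (Fin n) Trop) : Trop := ∑ i, A i i

/-- Evaluation of a word over the alphabet `{a, b}` (with `a = true`, `b = false`) at the
pair of tropical matrices `(A, B)`, i.e. `a ↦ A`, `b ↦ B`.  (On the empty word it returns
the identity matrix; we only use it on nonempty words.) -/
def mEval {n : ℕ} (A B : Matrix (Fin n) (Fin n) Trop) : List Bool → Matrix (Fin n) (Fin n) Trop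
  | [] => tId n
  | x :: w => tmul (if x then A else B) (mEval A B w)

/-- `lcm(1, 2, …, n)`. -/
def nbar (n : ℕ) : ℕ := (Finset.Icc 1 n).lcm id

/-- A walk on the digraph `G(A)`, given by its list of visited nodes: consecutive nodes must
be joined by an arc, i.e. have weight `≠ −∞`. -/
def IsWalk {n : ℕ} (A : Matrix (Fin n) (Fin n) Trop) (p : List (Fin n)) : Prop :=
  p.Chain' (fun i j => A i j ≠ ⊥)

/-- The weight of a walk: sum of the weights of its arcs. -/
def walkWeight {n : ℕ} (A : Matrix (Fin n) (Fin n) Trop) (p : List (Fin n)) : Trop :=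
  ((p.zip p.tail).map (fun q => A q.1 q.2)).sum

/-- The set of nodes on the cycle of the permutation `τ` containing `i`. -/
noncomputable def cycFinset {n : ℕ} (τ : Equiv.Perm (Fin n)) (i : Fin n) : Finset (Fin n) :=
  Finset.univ.filter (fun j => τ.SameCycle i j)

/-- `μ_i`: the average weight of the unique cycle of `τ` containing `i`. -/
noncomputable def mu {n : ℕ} (A : Matrix (Fin n) (Fin n) Trop) (τ : Equiv.Perm (Fin n))
    (i : Fin n) : ℝ :=
  (∑ j ∈ cycFinset τ i, (A j (τ j)).unbotD 0) / (cycFinset τ i).card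

/-- Upper triangular tropical matrix: all entries below the diagonal are `−∞`. -/
def UpperTri {n : ℕ} (A : Matrix (Fin n) (Fin n) Trop) : Prop :=
  ∀ i j : Fin n, j < i → A i j = ⊥

/-- Word substitution: replace each letter `a` (`= true`) of `w` by `w₁` and each letter
`b` (`= false`) by `w₂`. -/
def subst (w w₁ w₂ : List Bool) : List Bool :=
  w.flatMap (fun x => if x then w₁ else w₂)

/-- `k`-fold concatenation `w^k` of a word. -/
def wpow (w : List Bool) : ℕ → List Bool
  | 0 => []
  | t + 1 => w ++ wpow w t

/-- Evaluation of a word over an alphabet `α` in a semigroup `S` under the assignment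
`f : α → S`; returns `none` on the empty word. -/
def aEval {S : Type*} [Mul S] {α : Type*} (f : α → S) : List α → Option S
  | [] => none
  | x :: w => some (w.foldl (fun acc y => acc * f y) (f x))

/-!
Every permutation `π` of finite weight splits into its cycles, each of which is a simple cycle
of `G(A)`. A cycle of `π` that is also a cycle of `τ` weighs exactly the sum of the `μ_i` over
its nodes, any other cycle weighs strictly less by hypothesis. Summing over the cycles of `π`
gives `ω(π) ≤ Σ_i μ_i = ω(τ)`, with equality only if every cycle of `π` is a cycle of `τ`,
i.e. `π = τ`. Both the sum over cycles and the identity `Σ_i μ_i = ω(τ)` are instances of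
`Σ_i f i = Σ_i (Σ_{j ∈ C i} f j) / #(C i)` for the classes `C i` of a partition.
-/

open Finset Function Equiv

theorem sum_sum_div_card_eq_sum {α K : Type*} [Fintype α] [Semifield K] [CharZero K]
    (C : α → Finset α) (mem_self : ∀ i, i ∈ C i) (eq_of_mem : ∀ i j, j ∈ C i → C j = C i)
    (f : α → K) : ∑ i, (∑ j ∈ C i, f j) / #(C i) = ∑ i, f i := by
  have mem_comm : ∀ i j, j ∈ C i ↔ i ∈ C j := fun i j =>
    ⟨fun h => eq_of_mem i j h ▸ mem_self i, fun h => eq_of_mem j i h ▸ mem_self j⟩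
  calc ∑ i, (∑ j ∈ C i, f j) / #(C i)
      = ∑ i, ∑ j ∈ C i, f j / #(C j) := by
        refine sum_congr rfl fun i _ => ?_
        rw [sum_div]
        exact sum_congr rfl fun j hj => by rw [eq_of_mem i j hj]
    _ = ∑ j, ∑ i ∈ C j, f j / #(C j) :=
        sum_comm' fun i j => by simp [mem_comm]
    _ = ∑ j, f j := by
        refine sum_congr rfl fun j _ => ?_
        have : (#(C j) : K) ≠ 0 := Nat.cast_ne_zero.2 (card_ne_zero_of_mem (mem_self j))
        rw [sum_const, nsmul_eq_mul]
        field_simp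

theorem WithBot.coe_unbotD_of_ne_bot {α : Type*} {x : WithBot α} (d : α) (hx : x ≠ ⊥) :
    ((x.unbotD d : α) : WithBot α) = x := by
  lift x to α using hx
  rfl

section OrbitList

variable {α : Type*} (π : Perm α) (i : α)

noncomputable def orbitList : List α :=
  (List.range (minimalPeriod π i)).map (π^[·] i)

theorem orbitList_nodup : (orbitList π i).Nodup :=
  Cycle.nodup_coe_iff.mp (nodup_periodicOrbit (f := π) (x := i))

theorem orbitList_map_eq_rotate_one : (orbitList π i).map π = (orbitList π i).rotate 1 := by
  refine List.ext_getElem (by simp) fun m _ _ => ?_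
  simp only [orbitList, List.getElem_map, List.getElem_rotate, List.getElem_range,
    List.length_map, List.length_range, iterate_mod_minimalPeriod_eq, ← iterate_succ_apply' π]

variable [Finite α]

theorem mem_orbitList {j : α} : j ∈ orbitList π i ↔ π.SameCycle i j := by
  rw [orbitList, ← Cycle.mem_coe_iff, ← periodicOrbit_def,
    mem_periodicOrbit_iff (π.injective.mem_periodicPts i)]
  constructor
  · rintro ⟨k, rfl⟩
    rw [Perm.iterate_eq_pow]
    exact (Perm.SameCycle.refl π i).pow_right
  · intro h
    obtain ⟨k, hk⟩ := h.exists_nat_pow_eq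
    exact ⟨k, by rw [Perm.iterate_eq_pow, hk]⟩

theorem exists_orbitList_eq_cons : ∃ c, orbitList π i = i :: c := by
  obtain ⟨p, hp⟩ := Nat.exists_eq_add_one_of_ne_zero
    (minimalPeriod_pos_of_mem_periodicPts (π.injective.mem_periodicPts i)).ne'
  exact ⟨_, by rw [orbitList, hp, List.range_succ_eq_map, List.map_cons]; rfl⟩

end OrbitList

section CycFinset

variable {n : ℕ} {π τ : Perm (Fin n)} {i j : Fin n}

theorem mem_cycFinset : j ∈ cycFinset π i ↔ π.SameCycle i j := by
  simp [cycFinset]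

theorem self_mem_cycFinset : i ∈ cycFinset π i :=
  mem_cycFinset.2 (Perm.SameCycle.refl π i)

theorem cycFinset_eq_of_mem (h : j ∈ cycFinset π i) : cycFinset π j = cycFinset π i := by
  ext k
  simp only [mem_cycFinset] at h ⊢
  exact ⟨h.trans, h.symm.trans⟩

theorem cycFinset_eq_toFinset_orbitList : cycFinset π i = (orbitList π i).toFinset := by
  ext j
  rw [mem_cycFinset, List.mem_toFinset, mem_orbitList]

theorem cycFinset_eq_of_eqOn (h : ∀ j ∈ cycFinset π i, τ j = π j) :
    cycFinset τ i = cycFinset π i := by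
  have hpow : ∀ k : ℕ, (τ ^ k) i = (π ^ k) i := by
    intro k
    induction k with
    | zero => rfl
    | succ k ih =>
      rw [pow_succ', Perm.mul_apply, pow_succ', Perm.mul_apply, ih,
        h _ (mem_cycFinset.2 (Perm.SameCycle.refl π i).pow_right)]
  ext j
  simp only [mem_cycFinset]
  constructor
  · intro hj
    obtain ⟨k, rfl⟩ := hj.exists_nat_pow_eq
    rw [hpow]
    exact (Perm.SameCycle.refl π i).pow_right
  · intro hj
    obtain ⟨k, rfl⟩ := hj.exists_nat_pow_eq
    rw [← hpow]
    exact (Perm.SameCycle.refl τ i).pow_right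

theorem sum_div_card_cycFinset (π : Perm (Fin n)) (f : Fin n → ℝ) :
    ∑ i, (∑ j ∈ cycFinset π i, f j) / #(cycFinset π i) = ∑ i, f i :=
  sum_sum_div_card_eq_sum _ (fun _ => self_mem_cycFinset) (fun _ _ => cycFinset_eq_of_mem) f

end CycFinset

section Weights

variable {n : ℕ} (A : Matrix (Fin n) (Fin n) Trop)

section ClosedWalk

variable {π : Fin n → Fin n} {i : Fin n} {c : List (Fin n)}

theorem walkWeight_eq_sum_of_map_eq_rotate (h : (i :: c).map π = (i :: c).rotate 1) :
    walkWeight A (i :: c ++ [i]) = ((i :: c).map fun j => A j (π j)).sum := by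
  have htail : (i :: c ++ [i]).tail = (i :: c).map π := by simp [h]
  rw [walkWeight, htail, ← List.append_nil ((i :: c).map π), List.zip_append (by simp),
    List.zip_nil_right, List.append_nil]
  have hzip := List.zip_map' (l := i :: c) (f := id) (g := π)
  rw [List.map_id] at hzip
  rw [hzip, List.map_map]
  rfl

theorem isWalk_of_map_eq_rotate (h : (i :: c).map π = (i :: c).rotate 1)
    (hfin : ∀ j ∈ i :: c, A j (π j) ≠ ⊥) : IsWalk A (i :: c ++ [i]) := by
  have htail : (i :: c ++ [i]).tail = (i :: c).map π := by simp [h]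
  show List.IsChain _ _
  rw [List.isChain_iff_forall₂, htail, List.dropLast_concat]
  exact List.forall₂_map_right_iff.2 (List.forall₂_same.2 hfin)

end ClosedWalk

theorem sum_mu_eq_sum (τ : Perm (Fin n)) : ∑ i, mu A τ i = ∑ i, (A i (τ i)).unbotD 0 :=
  sum_div_card_cycFinset τ _

theorem sum_mu_cycFinset (τ : Perm (Fin n)) (i : Fin n) :
    ∑ j ∈ cycFinset τ i, mu A τ j = ∑ j ∈ cycFinset τ i, (A j (τ j)).unbotD 0 := by
  have hcard : (#(cycFinset τ i) : ℝ) ≠ 0 :=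
    Nat.cast_ne_zero.2 (card_ne_zero_of_mem self_mem_cycFinset)
  rw [sum_congr rfl fun j hj => by rw [mu, cycFinset_eq_of_mem hj], sum_const, nsmul_eq_mul]
  field_simp

theorem sum_cycFinset_eq_sum_mu_of_eqOn {τ π : Perm (Fin n)} {i : Fin n}
    (h : ∀ j ∈ cycFinset π i, τ j = π j) :
    ∑ j ∈ cycFinset π i, (A j (π j)).unbotD 0 = ∑ j ∈ cycFinset π i, mu A τ j := by
  calc ∑ j ∈ cycFinset π i, (A j (π j)).unbotD 0
      = ∑ j ∈ cycFinset π i, (A j (τ j)).unbotD 0 := sum_congr rfl fun j hj => by rw [h j hj]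
    _ = ∑ j ∈ cycFinset π i, mu A τ j := by rw [← cycFinset_eq_of_eqOn h, sum_mu_cycFinset]

/-- `i :: c` lists the nodes of a simple cycle of `G(A)`, which is a cycle of `τ` iff
`(i :: c).map τ = (i :: c).rotate 1`. -/
def CycleBound (τ : Perm (Fin n)) : Prop :=
  ∀ (i : Fin n) (c : List (Fin n)),
    (i :: c).Nodup →
    IsWalk A (i :: c ++ [i]) →
    (i :: c).map τ ≠ (i :: c).rotate 1 →
    walkWeight A (i :: c ++ [i]) < ((((i :: c).map (mu A τ)).sum : ℝ) : Trop)

section CycleBound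

variable {τ π : Perm (Fin n)}

theorem sum_cycFinset_lt_sum_mu (hcyc : CycleBound A τ) (hfin : ∀ j, A j (π j) ≠ ⊥)
    {i : Fin n} (hne : ∃ j ∈ cycFinset π i, τ j ≠ π j) :
    ∑ j ∈ cycFinset π i, (A j (π j)).unbotD 0 < ∑ j ∈ cycFinset π i, mu A τ j := by
  obtain ⟨c, hc⟩ := exists_orbitList_eq_cons π i
  have hnodup : (i :: c).Nodup := hc ▸ orbitList_nodup π i
  have hrot : (i :: c).map π = (i :: c).rotate 1 := hc ▸ orbitList_map_eq_rotate_one π i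
  have hC : cycFinset π i = (i :: c).toFinset := hc ▸ cycFinset_eq_toFinset_orbitList
  have hτ : (i :: c).map τ ≠ (i :: c).rotate 1 := by
    rw [← hrot]
    obtain ⟨j, hj, hτj⟩ := hne
    rw [hC, List.mem_toFinset] at hj
    exact fun h => hτj (List.map_inj_left.1 h j hj)
  have hlt := hcyc i c hnodup (isWalk_of_map_eq_rotate A hrot fun j _ => hfin j) hτ
  rw [walkWeight_eq_sum_of_map_eq_rotate A hrot] at hlt
  rw [← List.sum_toFinset _ hnodup, ← List.sum_toFinset _ hnodup, ← hC] at hlt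
  rw [← WithBot.coe_lt_coe, WithBot.coe_sum]
  simpa only [WithBot.coe_unbotD_of_ne_bot _ (hfin _)] using hlt

theorem sum_cycFinset_le_sum_mu (hcyc : CycleBound A τ) (hfin : ∀ j, A j (π j) ≠ ⊥)
    (i : Fin n) : ∑ j ∈ cycFinset π i, (A j (π j)).unbotD 0 ≤ ∑ j ∈ cycFinset π i, mu A τ j := by
  by_cases h : ∃ j ∈ cycFinset π i, τ j ≠ π j
  · exact (sum_cycFinset_lt_sum_mu A hcyc hfin h).le
  · refine (sum_cycFinset_eq_sum_mu_of_eqOn A fun j hj => ?_).le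
    exact by_contra fun hne => h ⟨j, hj, hne⟩

theorem sum_lt_sum_mu (hcyc : CycleBound A τ) (hfin : ∀ j, A j (π j) ≠ ⊥) (hne : π ≠ τ) :
    ∑ i, (A i (π i)).unbotD 0 < ∑ i, mu A τ i := by
  obtain ⟨i, hi⟩ : ∃ i, τ i ≠ π i := by
    by_contra! h
    exact hne (Perm.ext fun i => (h i).symm)
  have hcard : ∀ i, (0 : ℝ) < #(cycFinset π i) := fun i => by
    exact_mod_cast card_pos.2 ⟨i, self_mem_cycFinset⟩
  rw [← sum_div_card_cycFinset π, ← sum_div_card_cycFinset π (mu A τ)]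
  refine sum_lt_sum (fun i _ => ?_) ⟨i, mem_univ i, ?_⟩
  · exact div_le_div_of_nonneg_right (sum_cycFinset_le_sum_mu A hcyc hfin i) (hcard i).le
  · exact div_lt_div_of_pos_right
      (sum_cycFinset_lt_sum_mu A hcyc hfin ⟨i, self_mem_cycFinset, hi⟩) (hcard i)

end CycleBound

theorem permWeight_eq_coe_sum {π : Perm (Fin n)} (hfin : ∀ j, A j (π j) ≠ ⊥) :
    permWeight A π = ((∑ j, (A j (π j)).unbotD 0 : ℝ) : Trop) := by
  rw [permWeight, WithBot.coe_sum]
  exact sum_congr rfl fun j _ => (WithBot.coe_unbotD_of_ne_bot _ (hfin j)).symm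

theorem permWeight_eq_bot_iff {π : Perm (Fin n)} : permWeight A π = ⊥ ↔ ∃ j, A j (π j) = ⊥ := by
  simp [permWeight, WithBot.sum_eq_bot_iff]

theorem permWeight_lt_of_ne {τ π : Perm (Fin n)} (hcyc : CycleBound A τ)
    (hτ : permWeight A τ ≠ ⊥) (hne : π ≠ τ) : permWeight A π < permWeight A τ := by
  by_cases hbot : ∃ j, A j (π j) = ⊥
  · rw [(permWeight_eq_bot_iff A).2 hbot]
    exact bot_lt_iff_ne_bot.2 hτ
  · have hfin : ∀ j, A j (π j) ≠ ⊥ := not_exists.1 hbot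
    have hτfin : ∀ j, A j (τ j) ≠ ⊥ := fun j h => hτ (permWeight_eq_bot_iff A |>.2 ⟨j, h⟩)
    rw [permWeight_eq_coe_sum A hfin, permWeight_eq_coe_sum A hτfin, WithBot.coe_lt_coe,
      ← sum_mu_eq_sum A τ]
    exact sum_lt_sum_mu A hcyc hfin hne

end Weights

/-- cycles-to-permutation lemma.  A simple cycle of `G(A)` is encoded by a
nonempty list `i :: c` of pairwise distinct nodes such that the closed walk
`i :: c ++ [i]` uses only arcs of `G(A)`; it is a cycle of `τ` precisely when `τ` maps each
of its nodes to the next one, i.e. `(i :: c).map τ = (i :: c).rotate 1`.  If every simple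
cycle of `G(A)` which is not a cycle of `τ` has weight strictly less than the sum of the
`μ`-values of its nodes, then `A` is nonsingular and `τ` is the unique permutation attaining
`per(A)`. -/
theorem nonsingular_of_cycle_bound {n : ℕ} (A : Matrix (Fin n) (Fin n) Trop)
    (τ : Equiv.Perm (Fin n)) (hτ : permWeight A τ ≠ ⊥)
    (hcyc : ∀ (i : Fin n) (c : List (Fin n)),
      (i :: c).Nodup →
      IsWalk A (i :: c ++ [i]) →
      (i :: c).map τ ≠ (i :: c).rotate 1 →
      walkWeight A (i :: c ++ [i]) < ((((i :: c).map (mu A τ)).sum : ℝ) : Trop)) :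
    Nonsingular A ∧ ∀ π : Equiv.Perm (Fin n), permWeight A π = tPer A → π = τ := by
  have hlt : ∀ π, π ≠ τ → permWeight A π < permWeight A τ :=
    fun _ => permWeight_lt_of_ne A hcyc hτ
  have hper : tPer A = permWeight A τ := by
    refine le_antisymm (Finset.sup_le fun π _ => ?_) (le_sup (mem_univ τ))
    rcases eq_or_ne π τ with rfl | hne
    · exact le_rfl
    · exact (hlt π hne).le
  have huniq : ∀ π, permWeight A π = tPer A → π = τ :=
    fun π hπ => by_contra fun hne => (hlt π hne).ne (hπ.trans hper)
  exact ⟨⟨τ, hper.symm, huniq⟩, huniq⟩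
end

section
/- Let n ≥ 2. If a semigroup S satisfies a nontrivial semigroup identity (u,v) in which u and v involve at most n different letters, then S also satisfies a nontrivial 2-letter semigroup identity of the same length, where the length of an identity (u,v) is max(ℓ(u), ℓ(v)). -/
attribute [local instance] Classical.propDecidable

theorem aEval_map {S : Type*} [Mul S] {α β : Type*} (g : β → S) (σ : α → β) (u : List α) :
    aEval g (u.map σ) = aEval (g ∘ σ) u := by
  cases u with
  | nil => rfl
  | cons x w => simp [aEval, List.foldl_map, Function.comp]

/-- Distinct words are already told apart by some two-letter recolouring: if the lengths agree,
send the letter at a position where they differ to `true` and everything else to `false`. -/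
theorem List.exists_map_bool_ne_of_ne {α : Type*} {u v : List α} (huv : u ≠ v) :
    ∃ σ : α → Bool, u.map σ ≠ v.map σ := by
  classical
  by_contra! h
  have hlen : u.length = v.length := by simpa using congrArg List.length (h fun _ => true)
  refine huv (List.ext_getElem hlen fun i hui hvi => ?_)
  have hi := congrArg (·[i]?) (h fun x => decide (x = u[i]))
  simp only [List.getElem?_map, List.getElem?_eq_getElem hui, List.getElem?_eq_getElem hvi,
    Option.map_some, Option.some.injEq, decide_true] at hi
  exact (of_decide_eq_true hi.symm).symm

theorem two_letter_identity_general {S : Type*} [Semigroup S] {α : Type*}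
    (u v : List α) (hu : u ≠ []) (hv : v ≠ []) (huv : u ≠ v)
    (hid : ∀ f : α → S, aEval f u = aEval f v) :
    ∃ u' v' : List Bool, u' ≠ [] ∧ v' ≠ [] ∧ u' ≠ v' ∧
      max u'.length v'.length = max u.length v.length ∧
      ∀ s t : S, aEval (fun x : Bool => if x then s else t) u' =
        aEval (fun x : Bool => if x then s else t) v' := by
  obtain ⟨σ, hσ⟩ := List.exists_map_bool_ne_of_ne huv
  refine ⟨u.map σ, v.map σ, by simpa using hu, by simpa using hv, hσ, by simp, fun s t => ?_⟩
  rw [aEval_map, aEval_map]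
  exact hid _

/-- reduction to two letters.  If a semigroup `S` satisfies a nontrivial
`n`-letter identity `(u, v)` (for `n ≥ 2`), then it satisfies a nontrivial 2-letter
identity of the same length, the length of an identity being `max(ℓ(u), ℓ(v))`.  Here a
semigroup satisfies `(u, v)` iff every assignment of the letters gives equal evaluations. -/
theorem two_letter_identity {S : Type*} [Semigroup S] {α : Type*} [Fintype α] [DecidableEq α]
    (n : ℕ) (hn : 2 ≤ n)
    (u v : List α) (hu : u ≠ []) (hv : v ≠ []) (huv : u ≠ v)
    (hletters : (u.toFinset ∪ v.toFinset).card ≤ n)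
    (hid : ∀ f : α → S, aEval f u = aEval f v) :
    ∃ u' v' : List Bool, u' ≠ [] ∧ v' ≠ [] ∧ u' ≠ v' ∧
      max u'.length v'.length = max u.length v.length ∧
      ∀ s t : S, aEval (fun x : Bool => if x then s else t) u' =
        aEval (fun x : Bool => if x then s else t) v' :=
  two_letter_identity_general u v hu hv huv hid
end
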